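/- Let A be a closed symmetric relation in 𝔥 and let {𝓗,Γ} be an isometric boundary pair for A* whose domain T = dom Γ is dense in A* (in the norm of 𝔥×𝔥), with Weyl family M and γ-field γ, and assume that A₀ = ker Γ₀ is selfadjoint. Then: (i) T = A₀ +̂ N̂_λ(T), and N̂_λ(T) is dense in N̂_λ(A*), for every λ ∈ ℂ∖ℝ; (ii) for each fixed λ ∈ ℂ∖ℝ, Γ = (Γ ∩ (A₀ × (𝓗×𝓗))) +̂ {((γ(λ)h, λγ(λ)h),(h,h')) : (h,h') ∈ M(λ)}, a componentwise sum of relations from 𝔥×𝔥 to 𝓗×𝓗; (iii) if Γ̃ is an isometric boundary pair for A* (same 𝔥 and 𝓗) with Γ ⊆ Γ̃ and dom Γ̃ ⊆ A*, and M̃ is its Weyl family, then for each fixed λ ∈ ℂ∖ℝ one has Γ̃ = Γ if and only if M̃(λ) = M(λ). -/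

import Mathlib

noncomputable section

open Filter Topology

namespace BT

local notation "⟪" x ", " y "⟫" => @inner ℂ _ _ x y

section Ops
variable {α β γ' : Type*}

def domR (T : Set (α × β)) : Set α := {x | ∃ y, (x, y) ∈ T}
def ranR (T : Set (α × β)) : Set β := {y | ∃ x, (x, y) ∈ T}
def kerR [Zero β] (T : Set (α × β)) : Set α := {x | (x, (0 : β)) ∈ T}
def mulR [Zero α] (T : Set (α × β)) : Set β := {y | ((0 : α), y) ∈ T}
def invR (T : Set (α × β)) : Set (β × α) := {p | (p.2, p.1) ∈ T}
def compR (T₂ : Set (β × γ')) (T₁ : Set (α × β)) : Set (α × γ') :=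
  {p | ∃ y, (p.1, y) ∈ T₁ ∧ (y, p.2) ∈ T₂}
def csum [Add α] [Add β] (T₁ T₂ : Set (α × β)) : Set (α × β) :=
  {p | ∃ q ∈ T₁, ∃ r ∈ T₂, p = (q.1 + r.1, q.2 + r.2)}

def IsLinRel {M : Type*} [AddCommGroup M] [Module ℂ M] (s : Set M) : Prop :=
  ∃ p : Submodule ℂ M, (p : Set M) = s

def IsBddRel [Norm α] [Norm β] (T : Set (α × β)) : Prop :=
  ∃ C : ℝ, ∀ p ∈ T, ‖p.2‖ ≤ C * ‖p.1‖

def BddInv [NormedAddCommGroup α] (T : Set (α × α)) : Prop :=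
  (∀ v, ∃ p ∈ T, p.2 = v) ∧ (∀ p ∈ T, ∀ q ∈ T, p.2 = q.2 → p.1 = q.1) ∧
    ∃ C : ℝ, ∀ p ∈ T, ‖p.1‖ ≤ C * ‖p.2‖
end Ops

section Shifts
variable {α : Type*} [AddCommGroup α] [Module ℂ α]

def shiftSub (T : Set (α × α)) (l : ℂ) : Set (α × α) :=
  {p | ∃ q ∈ T, p = (q.1, q.2 - l • q.1)}
def shiftAdd (T : Set (α × α)) (l : ℂ) : Set (α × α) :=
  {p | ∃ q ∈ T, p = (q.1, q.2 + l • q.1)}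
def hatN (T : Set (α × α)) (l : ℂ) : Set (α × α) := {p ∈ T | p.2 = l • p.1}
def Nlam (T : Set (α × α)) (l : ℂ) : Set α := {f | (f, l • f) ∈ T}
def Hrel (A0s : Set (α × α)) (l : ℂ) : Set (α × (α × α)) :=
  {q | q.2 ∈ A0s ∧ q.2.2 - l • q.2.1 = q.1}
end Shifts

section InnerDefs
variable {E F : Type*} [NormedAddCommGroup E] [InnerProductSpace ℂ E]
  [NormedAddCommGroup F] [InnerProductSpace ℂ F]

def adjR (S : Set (F × E)) : Set (E × F) :=
  {p | ∀ q ∈ S, ⟪p.1, q.2⟫ = ⟪p.2, q.1⟫}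

def IsClosedSymRel (A : Set (E × E)) : Prop :=
  IsLinRel A ∧ IsClosed A ∧ A ⊆ adjR A

def kIP (p q : E × E) : ℂ := -Complex.I * ⟪q.1, p.2⟫ + Complex.I * ⟪q.2, p.1⟫

def kreinOrth (S : Set (E × E)) : Set (E × E) := {v | ∀ u ∈ S, kIP u v = 0}

def GreenPair (Γ : Set ((E × E) × (F × F))) : Prop :=
  ∀ p ∈ Γ, ∀ q ∈ Γ,
    ⟪q.1.1, p.1.2⟫ - ⟪q.1.2, p.1.1⟫ = ⟪q.2.1, p.2.2⟫ - ⟪q.2.2, p.2.1⟫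

def G0 (Γ : Set ((E × E) × (F × F))) : Set ((E × E) × F) := {p | ∃ h', (p.1, (p.2, h')) ∈ Γ}
def G1 (Γ : Set ((E × E) × (F × F))) : Set ((E × E) × F) := {p | ∃ h, (p.1, (h, p.2)) ∈ Γ}
def A0 (Γ : Set ((E × E) × (F × F))) : Set (E × E) := kerR (G0 Γ)
def A1 (Γ : Set ((E × E) × (F × F))) : Set (E × E) := kerR (G1 Γ)
def weyl (Γ : Set ((E × E) × (F × F))) (l : ℂ) : Set (F × F) :=
  {p | ∃ f : E, ((f, l • f), p) ∈ Γ}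
def gfield (Γ : Set ((E × E) × (F × F))) (l : ℂ) : Set (F × E) :=
  {p | ∃ h', ((p.2, l • p.2), (p.1, h')) ∈ Γ}

def kreinAdj (Γ : Set ((E × E) × (F × F))) : Set ((F × F) × (E × E)) :=
  {q | ∀ p ∈ Γ, kIP p.1 q.2 = kIP p.2 q.1}

def IsIsomPair (A : Set (E × E)) (Γ : Set ((E × E) × (F × F))) : Prop :=
  IsLinRel Γ ∧ domR Γ ⊆ adjR A ∧ GreenPair Γ
def IsDomDense (A : Set (E × E)) (Γ : Set ((E × E) × (F × F))) : Prop :=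
  closure (domR Γ) = adjR A
def IsABPair (A : Set (E × E)) (Γ : Set ((E × E) × (F × F))) : Prop :=
  IsIsomPair A Γ ∧ IsDomDense A Γ ∧ Dense (ranR (G0 Γ)) ∧ A0 Γ = adjR (A0 Γ)
def IsBPair (A : Set (E × E)) (Γ : Set ((E × E) × (F × F))) : Prop :=
  IsABPair A Γ ∧ ranR (G0 Γ) = Set.univ
def IsUnitaryPair (A : Set (E × E)) (Γ : Set ((E × E) × (F × F))) : Prop :=
  GreenPair Γ ∧ domR Γ ⊆ adjR A ∧ IsDomDense A Γ ∧ invR Γ = kreinAdj Γ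
def IsUnitaryBT (A : Set (E × E)) (Γ : Set ((E × E) × (F × F))) : Prop :=
  IsUnitaryPair A Γ ∧ mulR Γ = {0}
def IsOrdinaryBT (A : Set (E × E)) (Γ : Set ((E × E) × (F × F))) : Prop :=
  IsIsomPair A Γ ∧ mulR Γ = {0} ∧ domR Γ = adjR A ∧ ranR Γ = Set.univ

def Erel (Γ : Set ((E × E) × (F × F))) (m : ℂ) : Set (F × F) :=
  {p | ∃ u' v', (p.1, u') ∈ weyl Γ m ∧ (p.1, v') ∈ weyl Γ ((starRingEnd ℂ) m) ∧
        p.2 = (2 : ℂ)⁻¹ • (u' + v')}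

def triTransform (Γ : Set ((E × E) × (F × F))) (e : Set (F × F)) :
    Set ((E × E) × (F × F)) :=
  {q | ∃ h h' w, (q.1, (h, h')) ∈ Γ ∧ (h, w) ∈ e ∧ q.2 = (h, w + h')}

def formVal (l : ℂ) (u u' : F) : ℝ :=
  ((l - (starRingEnd ℂ) l)⁻¹ * (⟪u, u'⟫ - ⟪u', u⟫)).re

def FormClosable (l : ℂ) (Ms : Set (F × F)) : Prop :=
  ∀ u u' : ℕ → F, (∀ n, (u n, u' n) ∈ Ms) →
    Tendsto u atTop (nhds (0 : F)) →
    Tendsto (fun nm : ℕ × ℕ => formVal l (u nm.1 - u nm.2) (u' nm.1 - u' nm.2)) atTop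
      (nhds (0 : ℝ)) →
    Tendsto (fun n => formVal l (u n) (u' n)) atTop (nhds (0 : ℝ))

def formClosureDom (l : ℂ) (Ms : Set (F × F)) : Set F :=
  {v | ∃ u u' : ℕ → F, (∀ n, (u n, u' n) ∈ Ms) ∧ Tendsto u atTop (nhds v) ∧
    Tendsto (fun nm : ℕ × ℕ => formVal l (u nm.1 - u nm.2) (u' nm.1 - u' nm.2)) atTop
      (nhds (0 : ℝ))}

end InnerDefs

section CompleteDefs
variable {F : Type*} [NormedAddCommGroup F] [InnerProductSpace ℂ F] [CompleteSpace F]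

def IsNevFun (M₀ : ℂ → F →L[ℂ] F) : Prop :=
  DifferentiableOn ℂ M₀ {l : ℂ | l.im ≠ 0} ∧
  (∀ l : ℂ, l.im ≠ 0 → M₀ ((starRingEnd ℂ) l) = ContinuousLinearMap.adjoint (M₀ l)) ∧
  (∀ l : ℂ, 0 < l.im → ∀ u, 0 ≤ (⟪u, M₀ l u⟫).im)

def ImOp (Tb : F →L[ℂ] F) : F →L[ℂ] F :=
  ((2 : ℂ) * Complex.I)⁻¹ • (Tb - ContinuousLinearMap.adjoint Tb)

end CompleteDefs

/-!
For nonreal `λ` and a selfadjoint relation `H`, the estimate `|Im λ| ‖f‖ ≤ ‖f' - λ f‖` on `H`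
makes `ran (H - λ)` closed, and `ran (H - λ)ᗮ` consists of eigenvectors of `H* = H` for `λ̄`,
hence is trivial; so `H - λ` is onto. Applied to `H = A₀`, every pair splits as an element of
`A₀` plus an eigenpair `(f, λ f)`, and because `A₀ ⊆ dom Γ` this splitting stays inside `Γ`,
which gives the decompositions in (i) and (ii). The `A₀`-part is controlled by `‖f' - λ f‖`,
which tends to `0` near `N̂_λ(A*)`, so density of `dom Γ` passes to the eigenspaces. In (iii),
an element of `Γ'` minus its `A₀`-part has boundary value in `M'(λ) = M(λ)`, and Green's
identity for `Γ'` forces the two eigenvectors with the same boundary value to coincide.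
-/

open scoped NNReal

section SymmetricRelation
variable {E : Type*} [NormedAddCommGroup E] [InnerProductSpace ℂ E]

theorem isClosed_adjR (S : Set (E × E)) : IsClosed (adjR S) := by
  have h : adjR S = ⋂ q ∈ S, {p : E × E | ⟪p.1, q.2⟫ = ⟪p.2, q.1⟫} := by
    ext p; simp [adjR, Set.mem_iInter]
  rw [h]
  exact isClosed_biInter fun q _ =>
    isClosed_eq (continuous_fst.inner continuous_const) (continuous_snd.inner continuous_const)

def adjRSubmodule (S : Set (E × E)) : Submodule ℂ (E × E) where
  carrier := adjR S
  zero_mem' := fun q _ => by simp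
  add_mem' := fun {a b} ha hb q hq => by
    simp only [Prod.fst_add, Prod.snd_add, inner_add_left, ha q hq, hb q hq]
  smul_mem' := fun c a ha q hq => by
    simp only [Prod.smul_fst, Prod.smul_snd, inner_smul_left, ha q hq]

variable {H : Set (E × E)}

theorem abs_im_mul_norm_fst_le (hH : H ⊆ adjR H) {p : E × E} (hp : p ∈ H) (l : ℂ) :
    |l.im| * ‖p.1‖ ≤ ‖p.2 - l • p.1‖ := by
  have hreal : (⟪p.1, p.2⟫ : ℂ).im = 0 := by
    rw [← Complex.conj_eq_iff_im, inner_conj_symm]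
    exact (hH hp p hp).symm
  have him : (⟪p.1, p.2 - l • p.1⟫ : ℂ).im = -(l.im * ‖p.1‖ ^ 2) := by
    simp [inner_self_eq_norm_sq_to_K, hreal, ← Complex.ofReal_pow]
  have h : (|l.im| * ‖p.1‖) * ‖p.1‖ ≤ ‖p.2 - l • p.1‖ * ‖p.1‖ := by
    calc (|l.im| * ‖p.1‖) * ‖p.1‖ = |(⟪p.1, p.2 - l • p.1⟫ : ℂ).im| := by
          rw [him, abs_neg, abs_mul, abs_pow, abs_norm]; ring
      _ ≤ ‖p.1‖ * ‖p.2 - l • p.1‖ := (Complex.abs_im_le_norm _).trans (norm_inner_le_norm _ _)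
      _ = ‖p.2 - l • p.1‖ * ‖p.1‖ := mul_comm _ _
  rcases (norm_nonneg p.1).eq_or_lt with h0 | h0
  · rw [← h0, mul_zero]; exact norm_nonneg _
  · exact le_of_mul_le_mul_right h h0

theorem eq_zero_of_mem_of_im_ne_zero (hH : H ⊆ adjR H) {l : ℂ} (hl : l.im ≠ 0) {w : E}
    (hw : (w, l • w) ∈ H) : w = 0 := by
  have h := abs_im_mul_norm_fst_le hH hw l
  rw [sub_self, norm_zero] at h
  exact norm_eq_zero.mp <| le_antisymm
    (nonpos_of_mul_nonpos_right h (abs_pos.mpr hl)) (norm_nonneg w)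

theorem exists_norm_le_mul_norm_snd_sub_smul_fst (hH : H ⊆ adjR H) {l : ℂ} (hl : l.im ≠ 0) :
    ∃ K : ℝ≥0, ∀ p ∈ H, ‖p‖ ≤ K * ‖p.2 - l • p.1‖ := by
  have him : 0 < |l.im| := abs_pos.mpr hl
  refine ⟨⟨(1 + ‖l‖) / |l.im| + 1, by positivity⟩, fun p hp => ?_⟩
  set d := ‖p.2 - l • p.1‖
  have h1 : ‖p.1‖ ≤ d / |l.im| := by
    rw [le_div_iff₀ him, mul_comm]; exact abs_im_mul_norm_fst_le hH hp l
  have h2 : ‖p.2‖ ≤ d + ‖l‖ * (d / |l.im|) :=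
    calc ‖p.2‖ = ‖(p.2 - l • p.1) + l • p.1‖ := by rw [sub_add_cancel]
      _ ≤ d + ‖l‖ * ‖p.1‖ := (norm_add_le _ _).trans (by rw [norm_smul])
      _ ≤ d + ‖l‖ * (d / |l.im|) := by gcongr
  have hK : ((1 + ‖l‖) / |l.im| + 1) * d = d / |l.im| + ‖l‖ * (d / |l.im|) + d := by ring
  have hd : 0 ≤ d := norm_nonneg _
  have hdl : 0 ≤ d / |l.im| := by positivity
  have hld : 0 ≤ ‖l‖ * (d / |l.im|) := by positivity
  show ‖p‖ ≤ ((1 + ‖l‖) / |l.im| + 1) * d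
  rw [hK, Prod.norm_def, max_le_iff]
  constructor <;> linarith

end SymmetricRelation

section SelfAdjointRelation
variable {E : Type*} [NormedAddCommGroup E] [InnerProductSpace ℂ E]

def sndSubSmulFst (l : ℂ) : E × E →L[ℂ] E :=
  ContinuousLinearMap.snd ℂ E E - l • ContinuousLinearMap.fst ℂ E E

@[simp]
theorem sndSubSmulFst_apply (l : ℂ) (p : E × E) : sndSubSmulFst l p = p.2 - l • p.1 := rfl

theorem sub_snd_eq_smul_sub_fst_iff {l : ℂ} {x q : E × E} :
    (x - q).2 = l • (x - q).1 ↔ q.2 - l • q.1 = x.2 - l • x.1 := by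
  rw [Prod.snd_sub, Prod.fst_sub, smul_sub, sub_eq_sub_iff_sub_eq_sub, eq_comm]

variable [CompleteSpace E]

theorem isClosed_map_sndSubSmulFst (H : Submodule ℂ (E × E))
    (hc : IsClosed (H : Set (E × E))) (hH : (H : Set (E × E)) ⊆ adjR H) {l : ℂ}
    (hl : l.im ≠ 0) :
    IsClosed (H.map ((sndSubSmulFst l : E × E →L[ℂ] E) : E × E →ₗ[ℂ] E) : Set E) := by
  obtain ⟨K, hK⟩ := exists_norm_le_mul_norm_snd_sub_smul_fst hH hl
  have : CompleteSpace H := hc.completeSpace_coe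
  rw [Submodule.map_coe, Set.image_eq_range]
  exact (((sndSubSmulFst l).comp H.subtypeL).antilipschitz_of_bound fun p => hK p p.2)
    |>.isClosed_range (ContinuousLinearMap.uniformContinuous _)

variable {H : Set (E × E)}

theorem exists_snd_sub_smul_fst_eq (hH : H = adjR H) {l : ℂ} (hl : l.im ≠ 0) (v : E) :
    ∃ p ∈ H, p.2 - l • p.1 = v := by
  set H' := adjRSubmodule H
  have hH' : (H' : Set (E × E)) = H := hH.symm
  set R := H'.map ((sndSubSmulFst l : E × E →L[ℂ] E) : E × E →ₗ[ℂ] E)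
  have hRc : IsClosed (R : Set E) :=
    isClosed_map_sndSubSmulFst H' (hH' ▸ hH ▸ isClosed_adjR H)
      (hH'.symm ▸ hH.le) hl
  have : CompleteSpace R := hRc.completeSpace_coe
  have hR : Rᗮ = ⊥ := by
    refine (Submodule.eq_bot_iff _).mpr fun w hw => ?_
    have hconj : (w, (starRingEnd ℂ) l • w) ∈ H := by
      rw [hH]
      intro q hq
      have h0 : ⟪q.2 - l • q.1, w⟫ = 0 := hw _ ⟨q, hH' ▸ hq, rfl⟩
      rw [inner_sub_left, inner_smul_left, sub_eq_zero] at h0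
      have h1 := congrArg (starRingEnd ℂ) h0
      simp only [map_mul, inner_conj_symm, Complex.conj_conj] at h1
      simp [h1, mul_comm]
    exact eq_zero_of_mem_of_im_ne_zero hH.le (by simpa using hl) hconj
  obtain ⟨p, hp, hpv⟩ : v ∈ R := Submodule.orthogonal_eq_bot_iff.mp hR ▸ Submodule.mem_top
  exact ⟨p, hH' ▸ hp, hpv⟩

theorem exists_mem_sub_snd_eq_smul_fst (hH : H = adjR H) {l : ℂ} (hl : l.im ≠ 0)
    (x : E × E) : ∃ q ∈ H, (x - q).2 = l • (x - q).1 := by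
  obtain ⟨q, hq, hqx⟩ := exists_snd_sub_smul_fst_eq hH hl (x.2 - l • x.1)
  exact ⟨q, hq, sub_snd_eq_smul_sub_fst_iff.mpr hqx⟩

end SelfAdjointRelation

section LinearRelation
variable {M : Type*} [AddCommGroup M] [Module ℂ M] {s : Set M}

theorem IsLinRel.add_mem (h : IsLinRel s) {x y : M} (hx : x ∈ s) (hy : y ∈ s) : x + y ∈ s := by
  obtain ⟨p, rfl⟩ := h
  exact p.add_mem hx hy

theorem IsLinRel.sub_mem (h : IsLinRel s) {x y : M} (hx : x ∈ s) (hy : y ∈ s) : x - y ∈ s := by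
  obtain ⟨p, rfl⟩ := h
  exact p.sub_mem hx hy

theorem IsLinRel.domR {α β : Type*} [AddCommGroup α] [Module ℂ α] [AddCommGroup β]
    [Module ℂ β] {T : Set (α × β)} (h : IsLinRel T) : IsLinRel (domR T) := by
  obtain ⟨p, rfl⟩ := h
  exact ⟨p.map (LinearMap.fst ℂ α β), by ext x; simp [BT.domR]⟩

end LinearRelation

theorem A0_subset_domR {E F : Type*} [NormedAddCommGroup F] {Γ : Set ((E × E) × (F × F))} :
    A0 Γ ⊆ domR Γ := fun _ ⟨h', hx⟩ => ⟨(0, h'), hx⟩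

section BoundaryPair
variable {E F : Type*} [NormedAddCommGroup E] [InnerProductSpace ℂ E]
  [NormedAddCommGroup F] {Γ : Set ((E × E) × (F × F))} {l : ℂ}

theorem exists_mem_A0_sub_snd_eq_smul_fst [CompleteSpace E] (hA0 : A0 Γ = adjR (A0 Γ))
    (hl : l.im ≠ 0) (p : (E × E) × (F × F)) :
    ∃ q ∈ Γ, q.1 ∈ A0 Γ ∧ (p - q).1.2 = l • (p - q).1.1 := by
  obtain ⟨q, hq, hpq⟩ := exists_mem_sub_snd_eq_smul_fst hA0 hl p.1
  obtain ⟨k', hk'⟩ := hq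
  exact ⟨(q, (0, k')), hk', ⟨k', hk'⟩, hpq⟩

variable [InnerProductSpace ℂ F]

theorem eq_zero_of_greenPair (hg : GreenPair Γ) (hl : l.im ≠ 0) {w : E}
    (hw : ((w, l • w), (0 : F × F)) ∈ Γ) : w = 0 := by
  refine eq_zero_of_mem_of_im_ne_zero (H := {(w, l • w)}) ?_ hl rfl
  rintro _ rfl _ rfl
  have h := hg _ hw _ hw
  simpa only [Prod.fst_zero, Prod.snd_zero, inner_zero_left, sub_self, sub_eq_zero] using h

theorem eq_of_mem_gfield (hΓ : IsLinRel Γ) (hA0 : A0 Γ ⊆ adjR (A0 Γ)) (hl : l.im ≠ 0) {h : F}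
    {f g : E} (hf : (h, f) ∈ gfield Γ l) (hg : (h, g) ∈ gfield Γ l) : f = g := by
  obtain ⟨h', hf⟩ := hf
  obtain ⟨k', hg⟩ := hg
  have hfg : (f - g, l • (f - g)) ∈ A0 Γ := ⟨h' - k', by simpa [smul_sub] using hΓ.sub_mem hf hg⟩
  exact sub_eq_zero.mp (eq_zero_of_mem_of_im_ne_zero hA0 hl hfg)

variable [CompleteSpace E]

theorem domR_eq_csum_A0_hatN (hΓ : IsLinRel Γ) (hA0 : A0 Γ = adjR (A0 Γ)) (hl : l.im ≠ 0) :
    domR Γ = csum (A0 Γ) (hatN (domR Γ) l) := by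
  apply Set.Subset.antisymm
  · intro x hx
    obtain ⟨q, hq, hxq⟩ := exists_mem_sub_snd_eq_smul_fst hA0 hl x
    exact ⟨q, hq, x - q, ⟨hΓ.domR.sub_mem hx (A0_subset_domR hq), hxq⟩, by simp⟩
  · rintro _ ⟨q, hq, r, ⟨hr, -⟩, rfl⟩
    exact hΓ.domR.add_mem (A0_subset_domR hq) hr

theorem closure_hatN_domR {A : Set (E × E)} (hΓ : IsLinRel Γ) (hdense : IsDomDense A Γ)
    (hA0 : A0 Γ = adjR (A0 Γ)) (hl : l.im ≠ 0) :
    closure (hatN (domR Γ) l) = hatN (adjR A) l := by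
  apply Set.Subset.antisymm
  · refine closure_minimal (fun p hp => ⟨hdense ▸ subset_closure hp.1, hp.2⟩) ?_
    exact (isClosed_adjR A).inter (isClosed_eq continuous_snd (continuous_fst.const_smul l))
  · rintro p ⟨hpA, hp⟩
    obtain ⟨K, hK⟩ := exists_norm_le_mul_norm_snd_sub_smul_fst hA0.le hl
    choose q hqA hq using fun x : E × E => exists_snd_sub_smul_fst_eq hA0 hl (x.2 - l • x.1)
    have hq_small : Tendsto q (𝓝[domR Γ] p) (𝓝 0) := by
      refine squeeze_zero_norm (fun x => (hK _ (hqA x)).trans_eq (by rw [hq x])) ?_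
      have hc : Continuous fun x : E × E => (K : ℝ) * ‖x.2 - l • x.1‖ := by fun_prop
      simpa [hp] using tendsto_nhdsWithin_of_tendsto_nhds (hc.tendsto p)
    have : (𝓝[domR Γ] p).NeBot := mem_closure_iff_nhdsWithin_neBot.mp (hdense ▸ hpA)
    have hid : Tendsto id (𝓝[domR Γ] p) (𝓝 p) := tendsto_id.mono_left nhdsWithin_le_nhds
    refine mem_closure_of_tendsto (by simpa using hid.sub hq_small)
      (eventually_nhdsWithin_of_forall fun x hx => ?_)
    exact ⟨hΓ.domR.sub_mem hx (A0_subset_domR (hqA x)), sub_snd_eq_smul_sub_fst_iff.mpr (hq x)⟩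

theorem eq_csum_A0_gfield (hΓ : IsLinRel Γ) (hA0 : A0 Γ = adjR (A0 Γ)) (hl : l.im ≠ 0) :
    Γ = csum {p ∈ Γ | p.1 ∈ A0 Γ}
      {p | p.2 ∈ weyl Γ l ∧ (p.2.1, p.1.1) ∈ gfield Γ l ∧ p.1.2 = l • p.1.1} := by
  apply Set.Subset.antisymm
  · intro p hp
    obtain ⟨q, hqΓ, hqA, hpq⟩ := exists_mem_A0_sub_snd_eq_smul_fst hA0 hl p
    have hr : ((((p - q).1.1, l • (p - q).1.1), (p - q).2) : (E × E) × (F × F)) ∈ Γ :=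
      hpq ▸ hΓ.sub_mem hp hqΓ
    exact ⟨q, ⟨hqΓ, hqA⟩, p - q, ⟨⟨_, hr⟩, ⟨_, hr⟩, hpq⟩, by simp⟩
  · rintro _ ⟨q, ⟨hqΓ, -⟩, r, ⟨⟨f, hf⟩, hγ, hr⟩, rfl⟩
    obtain rfl : f = r.1.1 := eq_of_mem_gfield hΓ hA0.le hl ⟨r.2.2, hf⟩ hγ
    rw [← hr] at hf
    exact hΓ.add_mem hqΓ hf

theorem eq_iff_weyl_eq (hΓ : IsLinRel Γ) (hA0 : A0 Γ = adjR (A0 Γ)) (hl : l.im ≠ 0)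
    {Γ' : Set ((E × E) × (F × F))} (hΓ' : IsLinRel Γ') (hg : GreenPair Γ') (hsub : Γ ⊆ Γ') :
    Γ' = Γ ↔ weyl Γ' l = weyl Γ l := by
  refine ⟨fun h => h ▸ rfl, fun hw => Set.Subset.antisymm (fun p hp => ?_) hsub⟩
  obtain ⟨q, hqΓ, -, hpq⟩ := exists_mem_A0_sub_snd_eq_smul_fst hA0 hl p
  have hr : ((((p - q).1.1, l • (p - q).1.1), (p - q).2) : (E × E) × (F × F)) ∈ Γ' :=
    hpq ▸ hΓ'.sub_mem hp (hsub hqΓ)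
  obtain ⟨f, hf⟩ : (p - q).2 ∈ weyl Γ l := hw ▸ ⟨_, hr⟩
  have hfr : (p - q).1.1 - f = 0 :=
    eq_zero_of_greenPair hg hl (by simpa [smul_sub] using hΓ'.sub_mem hr (hsub hf))
  obtain rfl := sub_eq_zero.mp hfr
  rw [← hpq] at hf
  have hsum : q + (p - q) ∈ Γ := hΓ.add_mem hqΓ hf
  rwa [add_sub_cancel] at hsum

end BoundaryPair

variable {E F : Type*} [NormedAddCommGroup E] [InnerProductSpace ℂ E] [CompleteSpace E]
  [NormedAddCommGroup F] [InnerProductSpace ℂ F] [CompleteSpace F]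

theorem statement3_general (A : Set (E × E)) (Γ : Set ((E × E) × (F × F)))
    (hΓ : IsIsomPair A Γ) (hdense : IsDomDense A Γ)
    (hA0 : A0 Γ = adjR (A0 Γ)) :
    -- (i)
    (∀ l : ℂ, l.im ≠ 0 →
       domR Γ = csum (A0 Γ) (hatN (domR Γ) l) ∧
       closure (hatN (domR Γ) l) = hatN (adjR A) l) ∧
    -- (ii)
    (∀ l : ℂ, l.im ≠ 0 →
       Γ = csum {p ∈ Γ | p.1 ∈ A0 Γ}
             {p : (E × E) × (F × F) |
               p.2 ∈ weyl Γ l ∧ (p.2.1, p.1.1) ∈ gfield Γ l ∧ p.1.2 = l • p.1.1}) ∧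
    -- (iii)
    (∀ Γ' : Set ((E × E) × (F × F)), IsLinRel Γ' → GreenPair Γ' → domR Γ' ⊆ adjR A →
       Γ ⊆ Γ' → ∀ l : ℂ, l.im ≠ 0 → (Γ' = Γ ↔ weyl Γ' l = weyl Γ l)) :=
  ⟨fun _ hl => ⟨domR_eq_csum_A0_hatN hΓ.1 hA0 hl, closure_hatN_domR hΓ.1 hdense hA0 hl⟩,
    fun _ hl => eq_csum_A0_gfield hΓ.1 hA0 hl,
    fun _ hΓ' hg _ hsub _ hl => eq_iff_weyl_eq hΓ.1 hA0 hl hΓ' hg hsub⟩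

/-- decompositions of `dom Γ` and of the graph of `Γ` for an isometric
boundary pair with dense domain and selfadjoint `A₀`, and determination of `Γ` by its
Weyl family at one point. -/
theorem statement3 (A : Set (E × E)) (Γ : Set ((E × E) × (F × F)))
    (hA : IsClosedSymRel A) (hΓ : IsIsomPair A Γ) (hdense : IsDomDense A Γ)
    (hA0 : A0 Γ = adjR (A0 Γ)) :
    -- (i)
    (∀ l : ℂ, l.im ≠ 0 →
       domR Γ = csum (A0 Γ) (hatN (domR Γ) l) ∧
       closure (hatN (domR Γ) l) = hatN (adjR A) l) ∧
    -- (ii)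
    (∀ l : ℂ, l.im ≠ 0 →
       Γ = csum {p ∈ Γ | p.1 ∈ A0 Γ}
             {p : (E × E) × (F × F) |
               p.2 ∈ weyl Γ l ∧ (p.2.1, p.1.1) ∈ gfield Γ l ∧ p.1.2 = l • p.1.1}) ∧
    -- (iii)
    (∀ Γ' : Set ((E × E) × (F × F)), IsLinRel Γ' → GreenPair Γ' → domR Γ' ⊆ adjR A →
       Γ ⊆ Γ' → ∀ l : ℂ, l.im ≠ 0 → (Γ' = Γ ↔ weyl Γ' l = weyl Γ l)) :=
  statement3_general A Γ hΓ hdense hA0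

end BT
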